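/- arXiv:1704.05568 — 2 statements merged into one kernel-verified Lean document; each statement's English description precedes it below -/
import Mathlib

section
/- Let Z_1,…,Z_n be nonnegative reals with ∑_{k=1}^n (k−1)·Z_k = n−1, ∑_{k=1}^n k·Z_k = 2n, Z_k = 0 for k > V where V ≥ 1 is an integer, and let α > 1. Then ∑_{k=1}^n k^α·Z_k ≤ (n−1)·(V−1)^(α−1) + α·∑_{k=1}^n k^(α−1)·Z_k. -/
lemma pointwise_rpow (α : ℝ) (hα : 1 < α) (x : ℝ) (hx : 1 ≤ x) :
    x ^ α ≤ (x - 1) ^ α + α * x ^ (α - 1) := by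
  have hx0 : (0:ℝ) < x := lt_of_lt_of_le one_pos hx
  have hs : (-1 : ℝ) ≤ -(1/x) := by
    have : 1/x ≤ 1 := by
      rw [div_le_one hx0]; exact hx
    linarith
  have hb := one_add_mul_self_le_rpow_one_add hs hα.le
  -- 1 + α * (-(1/x)) ≤ (1 - 1/x) ^ α
  have hxne : x ≠ 0 := hx0.ne'
  have h1 : (0:ℝ) ≤ 1 + -(1/x) := by linarith
  have hmul := mul_le_mul_of_nonneg_right hb (Real.rpow_nonneg hx0.le α)
  have hL : (1 + -(1/x)) ^ α * x ^ α = (x - 1) ^ α := by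
    rw [← Real.mul_rpow h1 hx0.le]
    congr 1
    field_simp
    ring
  have hR : (1 + α * -(1/x)) * x ^ α = x ^ α - α * x ^ (α - 1) := by
    rw [Real.rpow_sub_one hxne]
    field_simp
    ring
  rw [hL, hR] at hmul
  linarith

theorem stmt4 (α : ℝ) (hα : 1 < α) (n : ℕ) (Z : ℕ → ℝ)
    (hZ : ∀ k, 0 ≤ Z k)
    (hsum1 : ∑ k ∈ Finset.Icc 1 n, ((k : ℝ) - 1) * Z k = (n : ℝ) - 1)
    (hsum2 : ∑ k ∈ Finset.Icc 1 n, (k : ℝ) * Z k = 2 * n)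
    (V : ℕ) (hV1 : 1 ≤ V)
    (hzero : ∀ k, V < k → Z k = 0) :
    ∑ k ∈ Finset.Icc 1 n, (k : ℝ) ^ α * Z k
      ≤ ((n : ℝ) - 1) * ((V : ℝ) - 1) ^ (α - 1)
        + α * ∑ k ∈ Finset.Icc 1 n, (k : ℝ) ^ (α - 1) * Z k := by
  have key : ∀ k ∈ Finset.Icc 1 n,
      (k : ℝ) ^ α * Z k ≤
        (((V : ℝ) - 1) ^ (α - 1) * (((k : ℝ) - 1) * Z k)
          + α * ((k : ℝ) ^ (α - 1) * Z k)) := by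
    intro k hk
    rcases eq_or_lt_of_le (hZ k) with hz | hz
    · simp [← hz]
    · -- Z k > 0, so k ≤ V
      have hkV : k ≤ V := by
        by_contra h
        exact hz.ne (hzero k (lt_of_not_ge h)).symm
      have hk1 : 1 ≤ k := (Finset.mem_Icc.mp hk).1
      have hx : (1:ℝ) ≤ (k:ℝ) := by exact_mod_cast hk1
      have hpt := pointwise_rpow α hα (k:ℝ) hx
      have hbd : ((k:ℝ) - 1) ^ α ≤ ((V:ℝ) - 1) ^ (α - 1) * ((k:ℝ) - 1) := by
        have hk0 : (0:ℝ) ≤ (k:ℝ) - 1 := by linarith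
        have hkV' : (k:ℝ) - 1 ≤ (V:ℝ) - 1 := by
          have : (k:ℝ) ≤ (V:ℝ) := by exact_mod_cast hkV
          linarith
        calc ((k:ℝ) - 1) ^ α = ((k:ℝ) - 1) ^ (α - 1) * ((k:ℝ) - 1) := by
              rw [← Real.rpow_add_one' hk0 (by linarith)]
              ring_nf
          _ ≤ ((V:ℝ) - 1) ^ (α - 1) * ((k:ℝ) - 1) :=
              mul_le_mul_of_nonneg_right
                (Real.rpow_le_rpow hk0 hkV' (by linarith)) hk0
      nlinarith [hZ k, hpt, hbd]
  calc ∑ k ∈ Finset.Icc 1 n, (k : ℝ) ^ α * Z k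
      ≤ ∑ k ∈ Finset.Icc 1 n,
          (((V : ℝ) - 1) ^ (α - 1) * (((k : ℝ) - 1) * Z k)
            + α * ((k : ℝ) ^ (α - 1) * Z k)) := Finset.sum_le_sum key
    _ = ((n : ℝ) - 1) * ((V : ℝ) - 1) ^ (α - 1)
        + α * ∑ k ∈ Finset.Icc 1 n, (k : ℝ) ^ (α - 1) * Z k := by
        rw [Finset.sum_add_distrib, ← Finset.mul_sum, ← Finset.mul_sum, hsum1]
        ring
end

section
/- For integers V ≥ 1, p ≥ 2, real α with p < α ≤ p+1, and real C > 0 satisfying (α−1)·C ≥ α + 2·α·(α−1)⋯(α−p+1) and C^ℓ ≥ α·ℓ!/(α−ℓ) for ℓ = 2,…,p−1, one has (V + C)^(α−1) ≥ V^(α−1) + (α−1)·V^(α−2)·C + ∑_{ℓ=2}^{p−1} [(α−1)(α−2)⋯(α−ℓ)/ℓ!]·V^(α−ℓ−1)·C^ℓ. -/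
/-!
Expand `x ↦ x ^ (α - 1)` around `V` to order `p - 1`, with the Lagrange form of the remainder.
The `p`-th derivative is `(α - 1)(α - 2)⋯(α - p) · x ^ (α - 1 - p)`, nonnegative since `α > p`,
so the Taylor polynomial evaluated at `V + C` is a lower bound for `(V + C) ^ (α - 1)`.
-/

open Set Finset Nat

theorem taylorWithinEval_le_of_iteratedDeriv_nonneg {f : ℝ → ℝ} {a b : ℝ} {n : ℕ} (hab : a < b)
    (hf : ContDiffOn ℝ (n + 1) f (Icc a b))
    (hf_nonneg : ∀ x ∈ Ioo a b, 0 ≤ iteratedDeriv (n + 1) f x) :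
    taylorWithinEval f n (Icc a b) a b ≤ f b := by
  rw [← uIcc_of_le hab.le] at hf ⊢
  obtain ⟨x, hx, hrem⟩ := taylor_mean_remainder_lagrange_iteratedDeriv hab.ne hf
  rw [uIoo_of_le hab.le] at hx
  have hba : 0 ≤ b - a := sub_nonneg.mpr hab.le
  have hfx := hf_nonneg x hx
  have hrem_nonneg : 0 ≤ iteratedDeriv (n + 1) f x * (b - a) ^ (n + 1) / (n + 1)! := by positivity
  linarith

theorem taylorWithinEval_rpow_const {a b : ℝ} (β : ℝ) (n : ℕ) (ha : 0 < a) (hab : a < b) :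
    taylorWithinEval (fun x => x ^ β) n (Icc a b) a b
      = ∑ k ∈ range (n + 1), (descPochhammer ℝ k).eval β / k ! * a ^ (β - k) * (b - a) ^ k := by
  rw [taylor_within_apply]
  refine sum_congr rfl fun k _ => ?_
  rw [iteratedDerivWithin_eq_iteratedDeriv (uniqueDiffOn_Icc hab)
      (Real.contDiffAt_rpow_const_of_ne ha.ne') (left_mem_Icc.mpr hab.le),
    iteratedDeriv_eq_iterate, Real.iter_deriv_rpow_const, smul_eq_mul]
  ring

theorem sum_descPochhammer_mul_rpow_le_add_rpow {x h β : ℝ} {n : ℕ} (hx : 0 < x) (hh : 0 < h)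
    (hn : (n : ℝ) ≤ β) :
    ∑ k ∈ range (n + 1), (descPochhammer ℝ k).eval β / k ! * x ^ (β - k) * h ^ k
      ≤ (x + h) ^ β := by
  have hxh : x < x + h := by linarith
  have htaylor := taylorWithinEval_le_of_iteratedDeriv_nonneg (f := fun y => y ^ β) (n := n) hxh
    (fun y hy => (Real.contDiffAt_rpow_const_of_ne (hx.trans_le hy.1).ne').contDiffWithinAt)
    (fun y hy => by
      rw [iteratedDeriv_eq_iterate, Real.iter_deriv_rpow_const]
      have hpoch : 0 ≤ (descPochhammer ℝ (n + 1)).eval β := descPochhammer_nonneg (by push_cast; linarith)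
      have hy₀ : 0 < y := hx.trans hy.1
      positivity)
  rwa [taylorWithinEval_rpow_const β n hx hxh, add_sub_cancel_left] at htaylor

theorem prod_Icc_one_sub_eq_descPochhammer_eval (α : ℝ) (ℓ : ℕ) :
    ∏ j ∈ Icc 1 ℓ, (α - j) = (descPochhammer ℝ ℓ).eval (α - 1) := by
  rw [descPochhammer_eval_eq_prod_range, ← Finset.Ico_add_one_right_eq_Icc, prod_Ico_eq_prod_range]
  refine prod_congr (by simp) fun j _ => ?_
  push_cast
  ring

theorem stmt5_general (V p : ℕ) (hV : 1 ≤ V) (hp : 2 ≤ p) (α C : ℝ)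
    (hαp : (p : ℝ) < α) (hC : 0 < C) :
    ((V : ℝ) + C) ^ (α - 1)
      ≥ (V : ℝ) ^ (α - 1) + (α - 1) * (V : ℝ) ^ (α - 2) * C
        + ∑ ℓ ∈ Finset.Icc 2 (p - 1),
            (∏ j ∈ Finset.Icc 1 ℓ, (α - j)) / (Nat.factorial ℓ)
              * (V : ℝ) ^ (α - ℓ - 1) * C ^ ℓ := by
  have hV₀ : (0 : ℝ) < V := by exact_mod_cast hV
  have hpα : ((p - 1 : ℕ) : ℝ) ≤ α - 1 := by
    rw [Nat.cast_sub (by omega)]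
    push_cast
    linarith
  have taylor := sum_descPochhammer_mul_rpow_le_add_rpow hV₀ hC hpα
  rw [Nat.sub_add_cancel (by omega), ← sum_range_add_sum_Ico _ hp, sum_range_succ,
    sum_range_one] at taylor
  rw [← Finset.Ico_add_one_right_eq_Icc, Nat.sub_add_cancel (by omega)]
  convert taylor using 2
  · rw [show α - 2 = α - 1 - 1 by ring]
    simp
  · refine sum_congr rfl fun ℓ _ => ?_
    rw [prod_Icc_one_sub_eq_descPochhammer_eval, sub_right_comm]

theorem stmt5 (V p : ℕ) (hV : 1 ≤ V) (hp : 2 ≤ p) (α C : ℝ)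
    (hαp : (p : ℝ) < α) (hαp1 : α ≤ (p : ℝ) + 1) (hC : 0 < C)
    (hC1 : (α - 1) * C ≥ α + 2 * ∏ j ∈ Finset.range p, (α - j))
    (hC2 : ∀ ℓ : ℕ, 2 ≤ ℓ → ℓ ≤ p - 1 → C ^ ℓ ≥ α * (Nat.factorial ℓ) / (α - ℓ)) :
    ((V : ℝ) + C) ^ (α - 1)
      ≥ (V : ℝ) ^ (α - 1) + (α - 1) * (V : ℝ) ^ (α - 2) * C
        + ∑ ℓ ∈ Finset.Icc 2 (p - 1),
            (∏ j ∈ Finset.Icc 1 ℓ, (α - j)) / (Nat.factorial ℓ)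
              * (V : ℝ) ^ (α - ℓ - 1) * C ^ ℓ :=
  stmt5_general V p hV hp α C hαp hC
end
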